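/- Let (G_{ij}, p_{ij}, h_{ij}) be a direct sequence of towers of countable groups. For i, j, k ∈ ℕ let G_{ij}^{(k)} ⊆ G_{ij} be the image of the composite vertical bonding homomorphism G_{kj} → G_{ij} when k ≥ i, and let G_{ij}^{(k)} = G_{ij} when k < i. For fixed i, j the subgroups G_{ij}^{(k)} decrease in k and form a tower with inclusion bonding maps; let Γ_{ij} = lim¹_k G_{ij}^{(k)} (the pointed orbit set). Each p_{ij} maps G_{i+1,j}^{(k)} into G_{ij}^{(k)} and hence induces a pointed map Γ_{i+1,j} → Γ_{ij}, making (Γ_{ij})_i a tower of pointed sets; let Γ_j = lim_i Γ_{ij} be its pointed set of threads. Each h_{ij} maps G_{ij}^{(k)} into G_{i,j+1}^{(k)} and hence induces pointed maps Γ_j → Γ_{j+1}, with composites Γ_j → Γ_k for j ≤ k. Suppose that for every j and every γ ∈ Γ_j there exists k ≥ j such that the composite map Γ_j → Γ_k sends γ to the basepoint. Then for each j there exists k > j such that the composite map Γ_j → Γ_k is trivial (sends every element to the basepoint). -/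

import Mathlib

/-!
Suppose the conclusion fails for `j`: for every `m` some thread of `Γ_j` survives in
`Γ_{j+m+1}`, say at level `i_m`. A family `u` is trivial in `lim¹_k S_k` iff a single `x`
satisfies `x * u 0 * ⋯ * u (k-1) ∈ S_k` for all `k`, and changing finitely many terms of `u`
does not change its class. Hence, building a thread of `Γ_j` from one element of each
`G_{lj}` (its "columns"), every one of the countably many requirements
"`x ∈ G_{i_m,j+m+1}` does not trivialise the image in `Γ_{i_m,j+m+1}`" can be forced by
extending any finite set of columns. A diagonal construction meets all of them at once, and
the resulting thread survives in every `Γ_{j+m}`, contrary to the hypothesis.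
-/

/-- The composite vertical bonding homomorphism `G_{i+m,j} → G_{i,j}`
(the identity when `m = 0`). -/
def pDown (G : ℕ → ℕ → Type*) [∀ i j, Group (G i j)]
    (p : ∀ i j, G (i + 1) j →* G i j) (j : ℕ) : ∀ (m i : ℕ), G (i + m) j →* G i j
  | 0, _ => MonoidHom.id _
  | m + 1, i => (pDown G p j m i).comp (p (i + m) j)

/-- `G_{ij}^{(k)}`: the image of the composite vertical bonding homomorphism
`G_{kj} → G_{ij}` when `k ≥ i`, and all of `G_{ij}` when `k < i` (since `k - i = 0`
and the composite is then the identity). -/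
def imgSub (G : ℕ → ℕ → Type*) [∀ i j, Group (G i j)]
    (p : ∀ i j, G (i + 1) j →* G i j) (i j k : ℕ) : Subgroup (G i j) :=
  (pDown G p j (k - i) i).range

/-- Two families `g, g'` indexed by `k` with values in the subgroups `G_{ij}^{(k)}`
represent the same element of `Γ_{ij} = lim¹_k G_{ij}^{(k)}` iff they lie in the same
orbit of the standard action of `∏_k G_{ij}^{(k)}` on itself (the bonding maps of the
tower `(G_{ij}^{(k)})_k` being inclusions). -/
def OrbRel (G : ℕ → ℕ → Type*) [∀ i j, Group (G i j)]
    (p : ∀ i j, G (i + 1) j →* G i j) (i j : ℕ) (g g' : ℕ → G i j) : Prop :=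
  ∃ c : ℕ → G i j, (∀ k, c k ∈ imgSub G p i j k) ∧
    ∀ k, c k * g k * (c (k + 1))⁻¹ = g' k

/-- The composite horizontal homomorphism `G_{i,j} → G_{i,j+m}`
(the identity when `m = 0`). -/
def hIterM (G : ℕ → ℕ → Type*) [∀ i j, Group (G i j)]
    (h : ∀ i j, G i j →* G i (j + 1)) (i j : ℕ) : ∀ m, G i j →* G i (j + m)
  | 0 => MonoidHom.id _
  | m + 1 => (h i (j + m)).comp (hIterM G h i j m)

section Lim1

variable {H : Type*} [Group H] {S : ℕ → Subgroup H}

/-- `OrbRel G p i j` is, by definition, `Lim1Rel (imgSub G p i j)`. -/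
def Lim1Rel (S : ℕ → Subgroup H) (a b : ℕ → H) : Prop :=
  ∃ c : ℕ → H, (∀ k, c k ∈ S k) ∧ ∀ k, c k * a k * (c (k + 1))⁻¹ = b k

def partialProd (u : ℕ → H) (k : ℕ) : H :=
  ((List.range k).map u).prod

@[simp]
theorem partialProd_zero (u : ℕ → H) : partialProd u 0 = 1 := rfl

theorem partialProd_succ (u : ℕ → H) (k : ℕ) :
    partialProd u (k + 1) = partialProd u k * u k :=
  List.prod_range_succ u k

@[simp]
theorem partialProd_one (k : ℕ) : partialProd (fun _ => (1 : H)) k = 1 := by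
  simp [partialProd]

theorem partialProd_congr {u v : ℕ → H} {k : ℕ} (huv : ∀ l < k, u l = v l) :
    partialProd u k = partialProd v k :=
  congrArg List.prod <| List.map_congr_left fun l hl => huv l (List.mem_range.1 hl)

theorem inv_partialProd_mul_mem (hS : Antitone S) {u : ℕ → H} (hu : ∀ l, u l ∈ S l)
    {k K : ℕ} (hkK : k ≤ K) : (partialProd u k)⁻¹ * partialProd u K ∈ S k := by
  induction K, hkK using Nat.le_induction with
  | base => simp
  | succ K hkK ih =>
    rw [partialProd_succ, ← mul_assoc]
    exact mul_mem ih (hS hkK (hu K))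

theorem Lim1Rel.trans {a b c : ℕ → H} (hab : Lim1Rel S a b) (hbc : Lim1Rel S b c) :
    Lim1Rel S a c := by
  obtain ⟨d, hd, hdab⟩ := hab
  obtain ⟨e, he, hebc⟩ := hbc
  refine ⟨fun k => e k * d k, fun k => mul_mem (he k) (hd k), fun k => ?_⟩
  rw [← hebc, ← hdab]
  group

theorem Lim1Rel.map {H' : Type*} [Group H'] {S' : ℕ → Subgroup H'} (φ : H →* H')
    (hφ : ∀ k, S k ≤ (S' k).comap φ) {a b : ℕ → H} (hab : Lim1Rel S a b) :
    Lim1Rel S' (fun k => φ (a k)) (fun k => φ (b k)) := by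
  obtain ⟨c, hc, hcab⟩ := hab
  refine ⟨fun k => φ (c k), fun k => hφ k (hc k), fun k => ?_⟩
  simp only [← hcab, map_mul, map_inv]

/-- The cocycle `c` is determined by `c 0`, since `c (k + 1) = (b k)⁻¹ * c k * a k`. -/
theorem lim1Rel_iff {a b : ℕ → H} :
    Lim1Rel S a b ↔ ∃ x, ∀ k, (partialProd b k)⁻¹ * x * partialProd a k ∈ S k := by
  constructor
  · rintro ⟨c, hc, hcab⟩
    have hc_eq : ∀ k, c k = (partialProd b k)⁻¹ * c 0 * partialProd a k := by
      intro k
      induction k with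
      | zero => simp
      | succ k ih =>
        rw [partialProd_succ, partialProd_succ, ← hcab k, ih]
        group
    exact ⟨c 0, fun k => hc_eq k ▸ hc k⟩
  · rintro ⟨x, hx⟩
    refine ⟨_, hx, fun k => ?_⟩
    rw [partialProd_succ, partialProd_succ]
    group

theorem lim1Rel_one_iff {a : ℕ → H} :
    Lim1Rel S a (fun _ => 1) ↔ ∃ x, ∀ k, x * partialProd a k ∈ S k := by
  simp [lim1Rel_iff]

theorem lim1Rel_of_eventuallyEq (hS : Antitone S) {a b : ℕ → H} (ha : ∀ k, a k ∈ S k)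
    (hb : ∀ k, b k ∈ S k) {K : ℕ} (hab : ∀ k ≥ K, a k = b k) : Lim1Rel S a b := by
  have hstable : ∀ k ≥ K, partialProd b k * (partialProd a k)⁻¹ =
      partialProd b K * (partialProd a K)⁻¹ := by
    intro k hk
    induction k, hk using Nat.le_induction with
    | base => rfl
    | succ k hk ih =>
      rw [partialProd_succ, partialProd_succ, hab k hk, ← ih]
      group
  refine lim1Rel_iff.2 ⟨partialProd b K * (partialProd a K)⁻¹, fun k => ?_⟩
  rcases le_total K k with hKk | hkK
  · rw [← hstable k hKk]
    simp
  · have hsplit : (partialProd b k)⁻¹ * (partialProd b K * (partialProd a K)⁻¹) *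
        partialProd a k = ((partialProd b k)⁻¹ * partialProd b K) *
          ((partialProd a k)⁻¹ * partialProd a K)⁻¹ := by
      group
    rw [hsplit]
    exact mul_mem (inv_partialProd_mul_mem hS hb hkK)
      (inv_mem (inv_partialProd_mul_mem hS ha hkK))

/-- No finite initial segment of `c` can make `l ↦ ψ l (c l)` trivial in `lim¹`, because the
tail can be chosen to agree with the nontrivial `v`. -/
theorem exists_extension_escaping (hS : Antitone S) {X : ℕ → Type*} (ψ : ∀ l, X l → H)
    (hψ : ∀ l y, ψ l y ∈ S l) {v : ℕ → H} (hvS : ∀ l, v l ∈ S l)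
    (hv : ¬ Lim1Rel S v (fun _ => 1)) {N : ℕ} (hvψ : ∀ l ≥ N, ∃ y, ψ l y = v l) (x : H)
    (K : ℕ) (c : ∀ l, X l) :
    ∃ (K' : ℕ) (c' : ∀ l, X l), (∀ l < K, c' l = c l) ∧ ∀ c'' : ∀ l, X l,
      (∀ l < K', c'' l = c' l) → ∃ k, x * partialProd (fun l => ψ l (c'' l)) k ∉ S k := by
  classical
  choose y hy using hvψ
  let c' : ∀ l, X l := fun l => if hl : l < K ∨ l < N then c l else y l (by omega)
  have hvw : Lim1Rel S v (fun l => ψ l (c' l)) :=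
    lim1Rel_of_eventuallyEq hS hvS (fun l => hψ l _) (K := max K N) fun l hl => by
      simp only [c', dif_neg (show ¬(l < K ∨ l < N) by omega), hy]
  obtain ⟨k, hk⟩ : ∃ k, x * partialProd (fun l => ψ l (c' l)) k ∉ S k := by
    by_contra! hx
    exact hv (hvw.trans (lim1Rel_one_iff.2 ⟨x, hx⟩))
  refine ⟨k, c', fun l hl => dif_pos (Or.inl hl), fun c'' hc'' => ⟨k, ?_⟩⟩
  rwa [partialProd_congr fun l hl => by rw [hc'' l hl]]

end Lim1

section Diagonal

variable {X : ℕ → Type*}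

theorem exists_eq_of_eq_below {K : ℕ → ℕ} (hK : StrictMono K) {c : ℕ → ∀ l, X l}
    (hc : ∀ t, ∀ l < K t, c (t + 1) l = c t l) :
    ∃ c' : ∀ l, X l, ∀ t, ∀ l < K t, c' l = c t l := by
  have hstable : ∀ t t', t ≤ t' → ∀ l < K t, c t' l = c t l := by
    intro t t' htt'
    induction t', htt' using Nat.le_induction with
    | base => exact fun _ _ => rfl
    | succ t' htt' ih =>
      intro l hl
      rw [hc t' l (hl.trans_le (hK.monotone htt')), ih l hl]
  refine ⟨fun l => c (l + 1) l, fun t l hl => ?_⟩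
  have hl' : l < K (l + 1) := (Nat.lt_succ_self l).trans_le (hK.id_le _)
  show c (l + 1) l = c t l
  rw [← hstable (l + 1) (max t (l + 1)) (le_max_right _ _) l hl',
    hstable t _ (le_max_left _ _) l hl]

/-- Baire category in `∀ l, X l` with the product of discrete topologies: each `P r` contains
a dense open set. -/
theorem exists_forall_of_extendable [∀ l, Nonempty (X l)] {ι : Type*} [Countable ι]
    (P : ι → (∀ l, X l) → Prop)
    (hP : ∀ r K (c : ∀ l, X l), ∃ (K' : ℕ) (c' : ∀ l, X l), (∀ l < K, c' l = c l) ∧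
      ∀ c'' : ∀ l, X l, (∀ l < K', c'' l = c' l) → P r c'') :
    ∃ c : ∀ l, X l, ∀ r, P r c := by
  rcases isEmpty_or_nonempty ι with hι | hι
  · exact ⟨fun _ => Classical.arbitrary _, fun r => isEmptyElim r⟩
  obtain ⟨e, he⟩ := exists_surjective_nat ι
  choose K' c' hagree hforce using hP
  let s : ℕ → ℕ × ∀ l, X l := fun t => Nat.rec (0, fun _ => Classical.arbitrary _)
    (fun t s => (max (K' (e t) s.1 s.2) (s.1 + 1), c' (e t) s.1 s.2)) t
  obtain ⟨c, hc⟩ := exists_eq_of_eq_below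
    (strictMono_nat_of_lt_succ fun t => (Nat.lt_succ_self _).trans_le (le_max_right _ _) :
      StrictMono fun t => (s t).1)
    (c := fun t => (s t).2) fun t l hl => hagree _ _ _ l hl
  refine ⟨c, fun r => ?_⟩
  obtain ⟨t, rfl⟩ := he r
  exact hforce _ _ _ c fun l hl => hc (t + 1) l (hl.trans_le (le_max_left _ _))

end Diagonal

section Tower

variable {G : ℕ → ℕ → Type*} [∀ i j, Group (G i j)] (p : ∀ i j, G (i + 1) j →* G i j)

/-- The composite vertical homomorphism `G_{nj} → G_{ij}`, extended by `1` when `n < i`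
(so that it is defined for all `n` without casts). -/
def pTo (j i : ℕ) : ∀ n, G n j →* G i j
  | 0 => if h : 0 = i then h ▸ MonoidHom.id _ else 1
  | n + 1 => if h : n + 1 = i then h ▸ MonoidHom.id _ else (pTo j i n).comp (p n j)

@[simp]
theorem pTo_self (j i : ℕ) : pTo p j i i = MonoidHom.id _ := by
  cases i <;> simp [pTo]

theorem pTo_succ {j i n : ℕ} (hin : i ≤ n) :
    pTo p j i (n + 1) = (pTo p j i n).comp (p n j) := by
  rw [pTo, dif_neg (by omega)]

theorem pTo_add (j m i : ℕ) : pTo p j i (i + m) = pDown G p j m i := by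
  induction m with
  | zero => exact pTo_self p j i
  | succ m ih =>
    change pTo p j i (i + m + 1) = _
    rw [pTo_succ p (Nat.le_add_right i m), ih]
    rfl

theorem p_pTo {j i n : ℕ} (hin : i + 1 ≤ n) (x : G n j) :
    p i j (pTo p j (i + 1) n x) = pTo p j i n x := by
  induction n, hin using Nat.le_induction with
  | base => simp [pTo_succ p le_rfl]
  | succ n hn ih => simp [pTo_succ p hn, pTo_succ p (show i ≤ n by omega), ih]

theorem imgSub_eq_range {j i k : ℕ} (hik : i ≤ k) :
    imgSub G p i j k = (pTo p j i k).range := by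
  rw [imgSub, ← pTo_add, Nat.add_sub_cancel' hik]

theorem imgSub_eq_top {j i k : ℕ} (hki : k ≤ i) : imgSub G p i j k = ⊤ := by
  rw [imgSub, Nat.sub_eq_zero_of_le hki]
  exact MonoidHom.range_eq_top.2 fun x => ⟨x, rfl⟩

theorem pTo_mem_imgSub (j i n : ℕ) (x : G n j) : pTo p j i n x ∈ imgSub G p i j n := by
  rcases le_total i n with hin | hni
  · rw [imgSub_eq_range p hin]
    exact ⟨x, rfl⟩
  · rw [imgSub_eq_top p hni]
    trivial

theorem imgSub_antitone (i j : ℕ) : Antitone (imgSub G p i j) := by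
  refine antitone_nat_of_succ_le fun k => ?_
  rcases le_or_gt i k with hik | hki
  · rw [imgSub_eq_range p hik, imgSub_eq_range p (by omega), pTo_succ p hik]
    rintro _ ⟨y, rfl⟩
    exact ⟨p k j y, rfl⟩
  · rw [imgSub_eq_top p hki.le]
    exact le_top

variable {p} {h : ∀ i j, G i j →* G i (j + 1)}
  (hcomm : ∀ i j (g : G (i + 1) j), h i j (p i j g) = p i (j + 1) (h (i + 1) j g))
include hcomm

theorem h_pDown (j m i : ℕ) (x : G (i + m) j) :
    h i j (pDown G p j m i x) = pDown G p (j + 1) m i (h (i + m) j x) := by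
  induction m with
  | zero => rfl
  | succ m ih => exact (ih _).trans (congrArg _ (hcomm (i + m) j x))

theorem imgSub_le_comap_h (i j k : ℕ) :
    imgSub G p i j k ≤ (imgSub G p i (j + 1) k).comap (h i j) := by
  rintro _ ⟨y, rfl⟩
  exact ⟨h _ j y, (h_pDown hcomm j _ i y).symm⟩

theorem imgSub_le_comap_hIterM (i j m k : ℕ) :
    imgSub G p i j k ≤ (imgSub G p i (j + m) k).comap (hIterM G h i j m) := by
  induction m with
  | zero => exact le_rfl
  | succ m ih => exact fun x hx => imgSub_le_comap_h hcomm i (j + m) k (ih hx)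

theorem orbRel_one_hIterM_succ {i j m : ℕ} {u : ℕ → G i j}
    (hu : OrbRel G p i (j + m) (fun k => hIterM G h i j m (u k)) (fun _ => 1)) :
    OrbRel G p i (j + (m + 1)) (fun k => hIterM G h i j (m + 1) (u k)) (fun _ => 1) := by
  have hmap := Lim1Rel.map (h i (j + m)) (imgSub_le_comap_h hcomm i (j + m)) hu
  simp only [map_one] at hmap
  exact hmap

end Tower

section Columns

variable {G : ℕ → ℕ → Type*} [∀ i j, Group (G i j)] (p : ∀ i j, G (i + 1) j →* G i j)

theorem imgSub_le_comap_p (i j k : ℕ) :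
    imgSub G p (i + 1) j k ≤ (imgSub G p i j k).comap (p i j) := by
  rcases le_or_gt (i + 1) k with hik | hki
  · rw [imgSub_eq_range p hik]
    rintro _ ⟨y, rfl⟩
    rw [Subgroup.mem_comap, p_pTo p hik]
    exact pTo_mem_imgSub p j i k y
  · rw [imgSub_eq_top p (show k ≤ i by omega)]
    exact fun _ _ => trivial

/-- The thread of `Γ_j` determined by one element `c l ∈ G_{lj}` in every column. -/
def columnThread (j : ℕ) (c : ∀ l, G l j) (i k : ℕ) : G i j :=
  pTo p j i k (c k)

theorem columnThread_mem (j : ℕ) (c : ∀ l, G l j) (i k : ℕ) :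
    columnThread p j c i k ∈ imgSub G p i j k :=
  pTo_mem_imgSub p j i k (c k)

theorem columnThread_compat (j : ℕ) (c : ∀ l, G l j) (i : ℕ) :
    OrbRel G p i j (fun k => p i j (columnThread p j c (i + 1) k)) (columnThread p j c i) :=
  lim1Rel_of_eventuallyEq (imgSub_antitone p i j)
    (fun k => imgSub_le_comap_p p i j k (columnThread_mem p j c (i + 1) k))
    (columnThread_mem p j c i) fun k hk => p_pTo p hk (c k)

variable {p} {h : ∀ i j, G i j →* G i (j + 1)}

theorem exists_column_extension_escaping
    (hcomm : ∀ i j (g : G (i + 1) j), h i j (p i j g) = p i (j + 1) (h (i + 1) j g))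
    {j i m : ℕ} {u : ℕ → G i j} (hu : ∀ k, u k ∈ imgSub G p i j k)
    (hnot : ¬ OrbRel G p i (j + m) (fun k => hIterM G h i j m (u k)) (fun _ => 1))
    (x : G i (j + m)) (K : ℕ) (c : ∀ l, G l j) :
    ∃ (K' : ℕ) (c' : ∀ l, G l j), (∀ l < K, c' l = c l) ∧ ∀ c'' : ∀ l, G l j,
      (∀ l < K', c'' l = c' l) → ∃ k,
        x * partialProd (fun l => hIterM G h i j m (columnThread p j c'' i l)) k ∉
          imgSub G p i (j + m) k := by
  refine exists_extension_escaping (imgSub_antitone p i (j + m))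
    (fun l y => hIterM G h i j m (pTo p j i l y))
    (fun l y => imgSub_le_comap_hIterM hcomm i j m l (pTo_mem_imgSub p j i l y))
    (fun l => imgSub_le_comap_hIterM hcomm i j m l (hu l)) hnot (N := i) (fun l hl => ?_) x K c
  obtain ⟨y, hy⟩ := imgSub_eq_range p hl ▸ hu l
  exact ⟨y, congrArg _ hy⟩

end Columns

/-- Theorem A(d): for a direct sequence of towers of countable groups, let
`Γ_{ij} = lim¹_k G_{ij}^{(k)}` (a pointed set) and `Γ_j = lim_i Γ_{ij}` (the pointed
set of threads).  A thread of `Γ_j` is represented by a family `g : ∀ i, ℕ → G i j`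
with `g i k ∈ G_{ij}^{(k)}`, such that for each `i` the image of `g (i+1)` under
`p_{ij}` is orbit-equivalent to `g i`; it maps to the basepoint of `Γ_{j+m}` iff each
coordinatewise horizontal image is orbit-equivalent to the constant family `1`.
If the colimit of the `Γ_j` is trivial, then for each `j` there is `k > j` such that
the composite map `Γ_j → Γ_k` is trivial. -/
theorem stmt_4 (G : ℕ → ℕ → Type*) [∀ i j, Group (G i j)] [∀ i j, Countable (G i j)]
    (p : ∀ i j, G (i + 1) j →* G i j) (h : ∀ i j, G i j →* G i (j + 1))
    (hcomm : ∀ i j (g : G (i + 1) j), h i j (p i j g) = p i (j + 1) (h (i + 1) j g))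
    (htriv : ∀ j (g : ∀ i, ℕ → G i j),
      (∀ i k, g i k ∈ imgSub G p i j k) →
      (∀ i, OrbRel G p i j (fun k => p i j (g (i + 1) k)) (g i)) →
      ∃ m, ∀ i, OrbRel G p i (j + m)
        (fun k => hIterM G h i j m (g i k)) (fun _ => 1)) :
    ∀ j, ∃ m, 0 < m ∧ ∀ g : ∀ i, ℕ → G i j,
      (∀ i k, g i k ∈ imgSub G p i j k) →
      (∀ i, OrbRel G p i j (fun k => p i j (g (i + 1) k)) (g i)) →
      ∀ i, OrbRel G p i (j + m)
        (fun k => hIterM G h i j m (g i k)) (fun _ => 1) := by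
  intro j
  by_contra! hbad
  choose g hg _ i hi using fun m => hbad (m + 1) m.succ_pos
  obtain ⟨c, hc⟩ := exists_forall_of_extendable (X := fun l => G l j)
    (fun (r : Σ m, G (i m) (j + (m + 1))) c => ∃ k,
      r.2 * partialProd (fun l => hIterM G h (i r.1) j (r.1 + 1) (columnThread p j c (i r.1) l)) k
        ∉ imgSub G p (i r.1) (j + (r.1 + 1)) k)
    fun r => exists_column_extension_escaping hcomm (hg r.1 (i r.1)) (hi r.1) r.2
  obtain ⟨m, hm⟩ := htriv j (columnThread p j c) (columnThread_mem p j c)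
    (columnThread_compat p j c)
  obtain ⟨x, hx⟩ := lim1Rel_one_iff.1 (orbRel_one_hIterM_succ hcomm (hm (i m)))
  obtain ⟨k, hk⟩ := hc ⟨m, x⟩
  exact hk (hx k)
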